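/- Let A be a Noetherian ring, I ⊆ A an ideal, and B a flat A-algebra. Denote by X̂ the I-adic completion of an A-module X. Then for every finite A-module M, the natural map M ⊗_A B̂ → (M ⊗_A B)^ is an isomorphism, and B̂ is flat over A. If moreover I ⊆ Rad(A) and B is faithfully flat over A, then B̂ is faithfully flat over A. -/

import Mathlib

/-!
For `M = Aⁿ` the map `M ⊗ B̂ → (M ⊗ B)^` is an isomorphism because completion commutes with
finite products; as both sides are right exact in `M`, it is surjective for every finite `M`.
For injectivity write `M = F / K` with `F` finite free. By Artin–Rees the `I`-adic filtration
of `F` induces on `K` a filtration equivalent to its own `I`-adic one, and flatness of `B`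
carries this over to `K ⊗ B ⊆ F ⊗ B`. Completion is exact on sequences with this property, so
the four lemma applies. Applied to the ideals `J ⊆ A`, this shows that `J ⊗ B̂ → B̂` is
injective, i.e. that `B̂` is flat. Finally `B̂` surjects onto `B / IB`, so `m B̂ = B̂` for a
maximal ideal `m ⊇ I` would force `m B = B`, which faithful flatness of `B` excludes.
-/

open TensorProduct

section Defs

variable {A : Type} [CommRing A] (I : Ideal A)
variable (M B : Type) [AddCommGroup M] [Module A M] [AddCommGroup B] [Module A B]

lemma tmul_mem_smul_top (J : Ideal A) (x : M) {b : B}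
    (hb : b ∈ J • (⊤ : Submodule A B)) :
    x ⊗ₜ[A] b ∈ J • (⊤ : Submodule A (M ⊗[A] B)) := by
  refine Submodule.smul_induction_on hb (fun a ha y _ => ?_) (fun y z hy hz => ?_)
  · rw [TensorProduct.tmul_smul]
    exact Submodule.smul_mem_smul ha Submodule.mem_top
  · rw [TensorProduct.tmul_add]
    exact Submodule.add_mem _ hy hz

/-- The canonical map `M ⊗ (B/IⁿB) → (M ⊗ B)/Iⁿ(M ⊗ B)`. -/
noncomputable def tensorQuotMap (n : ℕ) :
    M ⊗[A] (B ⧸ (I ^ n • ⊤ : Submodule A B)) →ₗ[A]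
      (M ⊗[A] B) ⧸ (I ^ n • ⊤ : Submodule A (M ⊗[A] B)) :=
  TensorProduct.lift
    { toFun := fun x => Submodule.liftQ _
        ((Submodule.mkQ _).comp (TensorProduct.mk A M B x))
        (fun b hb => by
          simp only [LinearMap.mem_ker, LinearMap.comp_apply, TensorProduct.mk_apply,
            Submodule.mkQ_apply, Submodule.Quotient.mk_eq_zero]
          exact tmul_mem_smul_top M B (I ^ n) x hb)
      map_add' := fun x y => by
        refine LinearMap.ext fun q => ?_
        obtain ⟨b, rfl⟩ := Submodule.Quotient.mk_surjective _ q
        simp [Submodule.liftQ_apply, TensorProduct.add_tmul]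
      map_smul' := fun a x => by
        refine LinearMap.ext fun q => ?_
        obtain ⟨b, rfl⟩ := Submodule.Quotient.mk_surjective _ q
        simp only [Submodule.liftQ_apply, LinearMap.comp_apply, TensorProduct.mk_apply,
          Submodule.mkQ_apply, RingHom.id_apply, LinearMap.smul_apply]
        rw [← TensorProduct.smul_tmul', Submodule.Quotient.mk_smul] }

/-- The natural map `M ⊗_A (I-adic completion of B) → (I-adic completion of M ⊗_A B)`. -/
noncomputable def adicCmp :
    M ⊗[A] AdicCompletion I B →ₗ[A] AdicCompletion I (M ⊗[A] B) :=
  AdicCompletion.lift I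
    (fun n => (tensorQuotMap I M B n).comp
      (LinearMap.lTensor M (AdicCompletion.eval I B n)))
    (by
      intro m n hle
      apply TensorProduct.ext'
      intro x b
      have h3 := b.2 hle
      obtain ⟨bb, hbb⟩ := Submodule.Quotient.mk_surjective _ (AdicCompletion.eval I B n b)
      have hb2 : AdicCompletion.eval I B m b = Submodule.Quotient.mk bb := by
        show b.val m = _
        rw [← h3, show b.val n = AdicCompletion.eval I B n b from rfl, ← hbb]
        simp [AdicCompletion.transitionMap]
      simp only [LinearMap.comp_apply, LinearMap.lTensor_tmul, ← hbb, hb2,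
        tensorQuotMap, TensorProduct.lift.tmul, LinearMap.coe_mk, AddHom.coe_mk,
        Submodule.liftQ_apply, TensorProduct.mk_apply, Submodule.mkQ_apply,
        AdicCompletion.transitionMap]
      rfl)

end Defs

namespace AdicCompletion

def IsAdicInducing {R M N : Type*} [CommSemiring R] [AddCommMonoid M] [Module R M]
    [AddCommMonoid N] [Module R N] (I : Ideal R) (f : M →ₗ[R] N) : Prop :=
  ∃ c, ∀ n, (I ^ (n + c) • ⊤ : Submodule R N).comap f ≤ I ^ n • ⊤

variable {R : Type*} [CommRing R] {I : Ideal R}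
variable {M N P : Type*} [AddCommGroup M] [Module R M] [AddCommGroup N] [Module R N]
  [AddCommGroup P] [Module R P] {f : M →ₗ[R] N} {g : N →ₗ[R] P}

theorem map_injective_of_isAdicInducing (hf : IsAdicInducing I f) :
    Function.Injective (map I f) := by
  obtain ⟨c, hc⟩ := hf
  rw [← LinearMap.ker_eq_bot, LinearMap.ker_eq_bot']
  intro x hx
  induction x using AdicCompletion.induction_on with | h a => ?_
  ext n
  have hfa : f (a (n + c)) ∈ (I ^ (n + c) • ⊤ : Submodule R N) := by
    simpa [Submodule.Quotient.mk_eq_zero] using congrArg (fun x ↦ x.val (n + c)) hx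
  rw [mk_apply_coe, Submodule.mkQ_apply, ← AdicCauchySequence.mk_eq_mk (Nat.le_add_right n c)]
  simpa using hc n hfa

theorem exact_map_of_isAdicInducing (hf : IsAdicInducing I f) (hfg : Function.Exact f g)
    (hg : Function.Surjective g) : Function.Exact (map I f) (map I g) := by
  refine LinearMap.exact_of_comp_eq_zero_of_ker_le_range ?_ fun y hy ↦ ?_
  · rw [map_comp, hfg.linearMap_comp_eq_zero, map_zero]
  obtain ⟨c, hc⟩ := hf
  induction y using AdicCompletion.induction_on with | h b => ?_
  -- lift each `b n` modulo `Iⁿ`; the lifts need not be Cauchy, but shifted by `c` they are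
  have hlift (n : ℕ) : ∃ k, f k ≡ b n [SMOD (I ^ n • ⊤ : Submodule R N)] := by
    have hgb : g (b n) ∈ (I ^ n • ⊤ : Submodule R N).map g := by
      rw [Submodule.map_smul'', Submodule.map_top, LinearMap.range_eq_top.mpr hg]
      simpa [Submodule.Quotient.mk_eq_zero] using congrArg (fun x ↦ x.val n) hy
    obtain ⟨e, he, hge⟩ := hgb
    obtain ⟨k, hk⟩ := (hfg (b n - e)).mp (by rw [map_sub, hge, sub_self])
    exact ⟨k, by rw [hk, SModEq.sub_mem, sub_sub_cancel_left, neg_mem_iff]; exact he⟩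
  choose k hk using hlift
  have hcauchy (n : ℕ) :
      k (n + c) ≡ k (n + 1 + c) [SMOD (I ^ n • ⊤ : Submodule R M)] := by
    refine SModEq.mono (hc n) (SModEq.comap _ ?_)
    refine (hk _).trans ((b.property (by omega)).trans (SModEq.mono ?_ (hk _).symm))
    exact Submodule.smul_mono_left (Ideal.pow_le_pow_right (by omega))
  refine ⟨mk I M (AdicCauchySequence.mk I M (fun n ↦ k (n + c)) hcauchy), ?_⟩
  ext n
  show Submodule.Quotient.mk (f (k (n + c))) = Submodule.Quotient.mk (b n)
  exact ((SModEq.mono (Submodule.smul_mono_left (Ideal.pow_le_pow_right (by omega)))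
    (hk (n + c))).trans (b.property (by omega)).symm)

variable (I) in
theorem isAdicInducing_subtype [IsNoetherianRing R] [Module.Finite R N] (S : Submodule R N) :
    IsAdicInducing I S.subtype := by
  obtain ⟨k, hk⟩ := I.exists_pow_inf_eq_pow_smul S
  refine ⟨k, fun n x hx ↦ ?_⟩
  have hxS : (x : N) ∈ (I ^ (n + k) • ⊤ : Submodule R N) ⊓ S := ⟨hx, x.2⟩
  rw [hk (n + k) (by omega), Nat.add_sub_cancel] at hxS
  have hx' : (x : N) ∈ (I ^ n • ⊤ : Submodule R S).map S.subtype := by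
    rw [Submodule.map_smul'', Submodule.map_top, Submodule.range_subtype]
    exact (smul_mono_right _ inf_le_right : _ ≤ I ^ n • S) hxS
  obtain ⟨y, hy, hyx⟩ := hx'
  rwa [← Subtype.ext hyx]

end AdicCompletion

section BaseChange

open LinearMap

variable {A : Type*} [CommRing A] {B X Y : Type*} [AddCommGroup B] [Module A B]
  [AddCommGroup X] [Module A X] [AddCommGroup Y] [Module A Y]

lemma range_rTensor_subtype_smul_top (J : Ideal A) :
    range ((J • ⊤ : Submodule A X).subtype.rTensor B) =
      (J • ⊤ : Submodule A (X ⊗[A] B)) := by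
  apply le_antisymm
  · rintro _ ⟨t, rfl⟩
    induction t with
    | zero => simp
    | add t t' ht ht' => rw [map_add]; exact add_mem ht ht'
    | tmul s b =>
      rw [rTensor_tmul, Submodule.subtype_apply]
      refine Submodule.smul_induction_on s.2 (fun a ha x _ ↦ ?_) (fun x y hx hy ↦ ?_)
      · rw [← TensorProduct.smul_tmul']
        exact Submodule.smul_mem_smul ha Submodule.mem_top
      · rw [TensorProduct.add_tmul]
        exact add_mem hx hy
  · refine Submodule.smul_le.mpr fun a ha t _ ↦ ?_
    induction t with
    | zero => simp
    | add t t' ht ht' => rw [smul_add]; exact add_mem (ht trivial) (ht' trivial)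
    | tmul x b =>
      exact ⟨⟨a • x, Submodule.smul_mem_smul ha Submodule.mem_top⟩ ⊗ₜ b, by
        simp [TensorProduct.smul_tmul']⟩

lemma range_rTensor_subtype_mono {T U : Submodule A X} (h : T ≤ U) :
    range (T.subtype.rTensor B) ≤ range (U.subtype.rTensor B) := by
  rw [← Submodule.subtype_comp_inclusion T U h, rTensor_comp]
  exact range_comp_le_range _ _

lemma Module.Flat.ker_rTensor_eq [Module.Flat A B] (g : X →ₗ[A] Y) :
    ker (g.rTensor B) = range ((ker g).subtype.rTensor B) :=
  (Module.Flat.rTensor_exact B (exact_subtype_ker_map g)).linearMap_ker_eq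

theorem AdicCompletion.IsAdicInducing.rTensor [Module.Flat A B] {I : Ideal A} {f : X →ₗ[A] Y}
    (hf : AdicCompletion.IsAdicInducing I f) : AdicCompletion.IsAdicInducing I (f.rTensor B) := by
  obtain ⟨c, hc⟩ := hf
  refine ⟨c, fun n ↦ ?_⟩
  set Q : Submodule A Y := I ^ (n + c) • ⊤
  have hQ : ker (Q.mkQ.rTensor B) = (I ^ (n + c) • ⊤ : Submodule A (Y ⊗[A] B)) := by
    rw [(rTensor_exact B (LinearMap.exact_subtype_mkQ Q) Q.mkQ_surjective).linearMap_ker_eq,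
      range_rTensor_subtype_smul_top]
  have hker : ker (Q.mkQ ∘ₗ f) ≤ I ^ n • ⊤ := by
    rw [ker_comp, Submodule.ker_mkQ]
    exact hc n
  calc (I ^ (n + c) • ⊤ : Submodule A (Y ⊗[A] B)).comap (f.rTensor B)
      = ker ((Q.mkQ ∘ₗ f).rTensor B) := by rw [← hQ, rTensor_comp, ker_comp]
    _ = range ((ker (Q.mkQ ∘ₗ f)).subtype.rTensor B) := Module.Flat.ker_rTensor_eq _
    _ ≤ range ((I ^ n • ⊤ : Submodule A X).subtype.rTensor B) :=
      range_rTensor_subtype_mono hker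
    _ = I ^ n • ⊤ := range_rTensor_subtype_smul_top _

theorem AdicCompletion.exact_map_rTensor_ker_subtype [IsNoetherianRing A] [Module.Finite A X]
    [Module.Flat A B] (I : Ideal A) {g : X →ₗ[A] Y} (hg : Function.Surjective g) :
    Function.Exact (AdicCompletion.map I ((ker g).subtype.rTensor B))
      (AdicCompletion.map I (g.rTensor B)) :=
  AdicCompletion.exact_map_of_isAdicInducing
    (AdicCompletion.isAdicInducing_subtype I _).rTensor
    (Module.Flat.rTensor_exact B (exact_subtype_ker_map g)) (g.rTensor_surjective B hg)

end BaseChange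

section AdicCmp

open LinearMap

variable {A : Type} [CommRing A] (I : Ideal A)
variable {M M' B : Type} [AddCommGroup M] [Module A M] [AddCommGroup M'] [Module A M']
  [AddCommGroup B] [Module A B]

lemma adicCmp_tmul_val_mk (x : M) (b : AdicCompletion I B) (n : ℕ) (b' : B)
    (hb : b.val n = Submodule.Quotient.mk b') :
    (adicCmp I M B (x ⊗ₜ[A] b)).val n = Submodule.Quotient.mk (x ⊗ₜ[A] b') := by
  show tensorQuotMap I M B n (x ⊗ₜ[A] b.val n) = _
  rw [hb]
  rfl

lemma map_rTensor_comp_adicCmp (φ : M →ₗ[A] M') :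
    (AdicCompletion.map I (φ.rTensor B)).restrictScalars A ∘ₗ adicCmp I M B =
      adicCmp I M' B ∘ₗ φ.rTensor (AdicCompletion I B) := by
  refine TensorProduct.ext' fun x b ↦ AdicCompletion.ext fun n ↦ ?_
  obtain ⟨b', hb⟩ := Submodule.Quotient.mk_surjective _ (b.val n)
  simp [AdicCompletion.map_val_apply, adicCmp_tmul_val_mk I _ _ n b' hb.symm]

variable (ι : Type) [Fintype ι] [DecidableEq ι] (B)

noncomputable def piScalarTensorEquiv : (ι → A) ⊗[A] B ≃ₗ[A] (ι → B) :=
  (TensorProduct.comm A (ι → A) B).trans (TensorProduct.piScalarRight A A B ι)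

@[simp]
lemma piScalarTensorEquiv_tmul (x : ι → A) (b : B) :
    piScalarTensorEquiv B ι (x ⊗ₜ[A] b) = fun j ↦ x j • b := by
  simp [piScalarTensorEquiv]

lemma piEquivOfFintype_congr_adicCmp (t : (ι → A) ⊗[A] AdicCompletion I B) :
    AdicCompletion.piEquivOfFintype I (fun _ : ι ↦ B)
        (AdicCompletion.congr I (piScalarTensorEquiv B ι) (adicCmp I (ι → A) B t)) =
      piScalarTensorEquiv (AdicCompletion I B) ι t := by
  induction t with
  | zero => simp
  | add t t' ht ht' => simp only [map_add, ht, ht']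
  | tmul x b =>
    funext j
    ext n
    obtain ⟨b', hb⟩ := Submodule.Quotient.mk_surjective _ (b.val n)
    simp [AdicCompletion.piEquivOfFintype_apply, AdicCompletion.pi, AdicCompletion.congr_apply,
      AdicCompletion.map_val_apply, adicCmp_tmul_val_mk I _ _ n b' hb.symm, hb,
      AdicCompletion.val_smul_apply]

lemma adicCmp_pi_bijective : Function.Bijective (adicCmp I (ι → A) B) := by
  refine (Function.Bijective.of_comp_iff' ((AdicCompletion.piEquivOfFintype I _).bijective.comp
    (AdicCompletion.congr I (piScalarTensorEquiv B ι)).bijective) _).mp ?_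
  convert (piScalarTensorEquiv (AdicCompletion I B) ι).bijective using 1
  exact funext (piEquivOfFintype_congr_adicCmp I B ι)

lemma adicCmp_surjective_of_surjective {F : Type} [AddCommGroup F] [Module A F]
    {p : F →ₗ[A] M} (hp : Function.Surjective p) (hF : Function.Surjective (adicCmp I F B)) :
    Function.Surjective (adicCmp I M B) := by
  refine Function.Surjective.of_comp (g := p.rTensor (AdicCompletion I B)) ?_
  rw [← LinearMap.coe_comp, ← map_rTensor_comp_adicCmp, LinearMap.coe_comp]
  exact (AdicCompletion.map_surjective I (p.rTensor_surjective B hp)).comp hF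

lemma adicCmp_surjective [Module.Finite A M] : Function.Surjective (adicCmp I M B) := by
  obtain ⟨n, p, hp⟩ := Module.Finite.exists_fin' A M
  exact adicCmp_surjective_of_surjective I B hp (adicCmp_pi_bijective I B _).surjective

lemma adicCmp_bijective_of_surjective [IsNoetherianRing A] [Module.Flat A B] {F : Type}
    [AddCommGroup F] [Module A F] [Module.Finite A F] {p : F →ₗ[A] M}
    (hp : Function.Surjective p) (hF : Function.Bijective (adicCmp I F B)) :
    Function.Bijective (adicCmp I M B) :=
  LinearMap.bijective_of_surjective_of_bijective_of_right_exact
    ((ker p).subtype.rTensor (AdicCompletion I B)) (p.rTensor (AdicCompletion I B))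
    ((AdicCompletion.map I ((ker p).subtype.rTensor B)).restrictScalars A)
    ((AdicCompletion.map I (p.rTensor B)).restrictScalars A)
    (adicCmp I (ker p) B) (adicCmp I F B) (adicCmp I M B)
    (map_rTensor_comp_adicCmp I (ker p).subtype) (map_rTensor_comp_adicCmp I p)
    (rTensor_exact _ (exact_subtype_ker_map p) hp)
    (AdicCompletion.exact_map_rTensor_ker_subtype I hp)
    (adicCmp_surjective I B) hF (p.rTensor_surjective _ hp)
    (AdicCompletion.map_surjective I (p.rTensor_surjective B hp))

theorem adicCmp_bijective [IsNoetherianRing A] [Module.Flat A B] [Module.Finite A M] :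
    Function.Bijective (adicCmp I M B) := by
  obtain ⟨n, p, hp⟩ := Module.Finite.exists_fin' A M
  exact adicCmp_bijective_of_surjective I B hp (adicCmp_pi_bijective I B _)

theorem AdicCompletion.flat_of_flat [IsNoetherianRing A] [Module.Flat A B] :
    Module.Flat A (AdicCompletion I B) := by
  refine Module.Flat.iff_rTensor_injective'.mpr fun J ↦ ?_
  have hJ : Function.Injective
      ((AdicCompletion.map I (J.subtype.rTensor B)).restrictScalars A ∘ₗ adicCmp I J B) :=
    (AdicCompletion.map_injective_of_isAdicInducing
      (AdicCompletion.isAdicInducing_subtype I J).rTensor).comp (adicCmp_bijective I B).injective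
  rw [map_rTensor_comp_adicCmp, coe_comp] at hJ
  exact hJ.of_comp

end AdicCmp

section FaithfullyFlat

variable {A B : Type*} [CommRing A] [AddCommGroup B] [Module A B] (I : Ideal A)

theorem AdicCompletion.faithfullyFlat_of_le_jacobson [Module.FaithfullyFlat A B]
    [Module.Flat A (AdicCompletion I B)] (hI : I ≤ (⊥ : Ideal A).jacobson) :
    Module.FaithfullyFlat A (AdicCompletion I B) := by
  refine ⟨fun m hm hmB ↦ Module.FaithfullyFlat.submodule_ne_top (M := B) hm ?_⟩
  have hIm : I ^ 1 ≤ m := (pow_one I).le.trans (hI.trans (sInf_le ⟨bot_le, hm⟩))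
  have hmQ : (m • ⊤ : Submodule A (B ⧸ (I ^ 1 • ⊤ : Submodule A B))) = ⊤ := by
    have hsurj := LinearMap.range_eq_top.mpr (AdicCompletion.eval_surjective I B 1)
    simpa [Submodule.map_smul'', hsurj] using
      congrArg (Submodule.map (AdicCompletion.eval I B 1)) hmB
  calc m • ⊤ = (I ^ 1 • ⊤ : Submodule A B) ⊔ m • ⊤ :=
        (sup_eq_right.mpr (Submodule.smul_mono_left hIm)).symm
    _ = ⊤ := by
      rw [← Submodule.comap_map_mkQ, Submodule.map_smul'', Submodule.map_top,
        Submodule.range_mkQ, hmQ, Submodule.comap_top]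

end FaithfullyFlat

/-- **Flat base change and adic completion (Artin–Rees).**
Let `A` be Noetherian, `I ⊆ A` an ideal and `B` a flat `A`-algebra.  Then for every
finite `A`-module `M` the natural map `M ⊗_A B̂ → (M ⊗_A B)^` is an isomorphism, and `B̂`
is flat over `A`.  If moreover `I ⊆ Rad(A)` and `B` is faithfully flat over `A`, then
`B̂` is faithfully flat over `A`. -/
theorem statement16 {A : Type} [CommRing A] [IsNoetherianRing A] (I : Ideal A)
    (B : Type) [CommRing B] [Algebra A B] [Module.Flat A B] :
    (∀ (M : Type) [AddCommGroup M] [Module A M], Module.Finite A M →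
      Function.Bijective (adicCmp I M B)) ∧
    Module.Flat A (AdicCompletion I B) ∧
    (I ≤ (⊥ : Ideal A).jacobson → Module.FaithfullyFlat A B →
      Module.FaithfullyFlat A (AdicCompletion I B)) :=
  have := AdicCompletion.flat_of_flat I B
  ⟨fun _ _ _ _ ↦ adicCmp_bijective I B, this,
    fun hI _ ↦ AdicCompletion.faithfullyFlat_of_le_jacobson I hI⟩
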